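/- Let B̂ be the quotient of the complete metric space (B, d_bottle) of q-tame barcodes by the action of ℝ by overall shifts, equipped with the induced (Hausdorff) quotient distance δ. Then B̂ is a complete metric space. -/

import Mathlib

open scoped Classical
noncomputable section

/-- A bar: a pair `(a, b)` representing the interval `(a, b]` (with `b = ⊤` for `(a, ∞)`). -/
abbrev Bar : Type := ℝ × EReal

namespace Bar

/-- The interval `(a,b]` is nonempty. -/
def IsValid (I : Bar) : Prop := (I.1 : EReal) < I.2

/-- The length of a bar. -/
def len (I : Bar) : EReal := I.2 - (I.1 : EReal)

/-- A bar is semi-infinite if its right endpoint is `+∞`. -/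
def IsInf (I : Bar) : Prop := I.2 = ⊤

end Bar

/-- `I ⊆ J^{-δ}`, where `(a,b]^{-δ} = (a-δ, b+δ]`. -/
def barSub (I J : Bar) (δ : ℝ) : Prop :=
  J.1 - δ ≤ I.1 ∧ I.2 ≤ J.2 + (δ : EReal)

/-- A barcode: a multiset of nonempty intervals of the form `(a,b]` or `(a,∞)`,
recorded by its multiplicity function. -/
structure Barcode where
  mult : Bar → ℕ
  valid : ∀ I, mult I ≠ 0 → I.IsValid

namespace Barcode

/-- `m` is a `δ`-matching between the barcodes `B` and `B'`: it matches `m I J` copies of the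
bar `I` of `B` with copies of the bar `J` of `B'`; matched bars must be `δ`-close, and
unmatched (deleted) bars must have length at most `2δ`. -/
def IsMatching (B B' : Barcode) (δ : ℝ) (m : Bar → Bar → ℕ) : Prop :=
  (∀ I, {J | m I J ≠ 0}.Finite) ∧
  (∀ J, {I | m I J ≠ 0}.Finite) ∧
  (∀ I, ∑ᶠ J, m I J ≤ B.mult I) ∧
  (∀ J, ∑ᶠ I, m I J ≤ B'.mult J) ∧
  (∀ I, ∑ᶠ J, m I J < B.mult I → I.len ≤ ((2 * δ : ℝ) : EReal)) ∧
  (∀ J, ∑ᶠ I, m I J < B'.mult J → J.len ≤ ((2 * δ : ℝ) : EReal)) ∧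
  (∀ I J, m I J ≠ 0 → barSub I J δ ∧ barSub J I δ)

/-- `B` and `B'` admit a `δ`-matching. -/
def HasMatching (B B' : Barcode) (δ : ℝ) : Prop := ∃ m, IsMatching B B' δ m

/-- The bottleneck distance between two barcodes. -/
def bottleneck (B B' : Barcode) : EReal :=
  sInf {x : EReal | ∃ δ : ℝ, 0 ≤ δ ∧ x = (δ : EReal) ∧ HasMatching B B' δ}

/-- A barcode is finite if it has finitely many bars counted with multiplicity. -/
def IsFinite (B : Barcode) : Prop := {I | B.mult I ≠ 0}.Finite

/-- A barcode is q-tame if for every `ε > 0` it has finitely many bars of length `≥ ε`. -/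
def QTame (B : Barcode) : Prop :=
  ∀ ε : ℝ, 0 < ε → {I | B.mult I ≠ 0 ∧ (ε : EReal) ≤ I.len}.Finite

end Barcode

/-- The barcode `B[c]`, obtained from `B` by shifting all bars by `c`. -/
def Barcode.shift (B : Barcode) (c : ℝ) : Barcode where
  mult I := B.mult (I.1 - c, I.2 - (c : EReal))
  valid I h := by
    have hv := B.valid _ h
    rcases I with ⟨x, y⟩
    simp only [Bar.IsValid] at hv ⊢
    induction y using EReal.rec with
    | bot => simp [EReal.bot_sub] at hv
    | coe r =>
        rw [show ((r : EReal) - (c : EReal)) = ((r - c : ℝ) : EReal) by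
          rw [EReal.coe_sub]] at hv
        have : x - c < r - c := by exact_mod_cast hv
        exact_mod_cast (by linarith : x < r)
    | top => exact EReal.coe_lt_top x

/-- The distance between orbits of the shift action: the quotient (Hausdorff) distance on
barcodes up to overall shift. -/
def Barcode.qdist (B B' : Barcode) : EReal :=
  sInf {x : EReal | ∃ c : ℝ, x = Barcode.bottleneck B (B'.shift c)}

/-!
Pass to a subsequence with `qdist (u k) (u (k + 1)) < 2⁻ᵏ` and shift its terms cumulatively, so
that consecutive terms admit genuine `2⁻ᵏ`-matchings. Realise every matching as a partial
bijection between copies of bars. Following a copy through the successive bijections gives a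
chain of bars whose endpoints form a Cauchy sequence, hence converge to a limit bar. The limit
barcode counts the chains converging to each bar: the count is finite by q-tameness and
stabilises, because a chain born after level `k` converges to a bar of length at most `4 · 2⁻ᵏ`.
Sending each copy at level `k` to the limit of its chain (deleting short and dying copies) is a
`2 · 2⁻ᵏ`-matching, and the triangle inequality, obtained by composing partial bijections, gives
convergence of the whole sequence.
-/

open Filter Topology

lemma EReal.coe_le_of_two_mul_le_of_le_add {x y : EReal} {t : ℝ} (h₁ : ((2 * t : ℝ) : EReal) ≤ y)
    (h₂ : y ≤ x + t) : (t : EReal) ≤ x := by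
  by_contra! hx
  have : x + t < ((2 * t : ℝ) : EReal) :=
    calc x + t < (t : EReal) + t := EReal.add_lt_add_right_coe hx t
      _ = ((2 * t : ℝ) : EReal) := by norm_cast; ring
  exact (h₁.trans h₂).not_gt this

lemma Set.Finite.finsum_ncard_inter_preimage {α β : Type*} {s : Set α} (hs : s.Finite)
    (g : α → β) : ∑ᶠ b, (s ∩ g ⁻¹' {b}).ncard = s.ncard := by
  have hunion : s = ⋃ b ∈ g '' s, s ∩ g ⁻¹' {b} := by
    ext a
    simp only [Set.mem_iUnion, Set.mem_inter_iff, Set.mem_preimage, Set.mem_singleton_iff,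
      Set.mem_image]
    exact ⟨fun ha => ⟨g a, ⟨a, ha, rfl⟩, ha, rfl⟩, fun ⟨_, _, ha, _⟩ => ha⟩
  rw [← finsum_mem_univ, finsum_mem_inter_support_eq' _ _ (g '' s), hunion,
    (hs.image g).ncard_biUnion (fun _ _ => hs.inter_of_left _), ← hunion]
  · exact fun b _ b' _ hbb' => Set.disjoint_left.2 fun a ha ha' => hbb' (ha.2.symm.trans ha'.2)
  · intro b hb
    obtain ⟨a, ha, rfl⟩ := Set.nonempty_of_ncard_ne_zero hb
    exact ⟨fun _ => ⟨a, ha, rfl⟩, fun _ => trivial⟩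

lemma exists_sigmaFin_embedding {α : Type*} {f : α → ℕ} (hf : (Function.support f).Finite)
    {n : ℕ} (h : ∑ᶠ a, f a ≤ n) :
    ∃ e : (Σ a, Fin (f a)) ↪ Fin n, ∀ k, k ∉ Set.range e → ∑ᶠ a, f a < n := by
  let toSupport : (Σ a, Fin (f a)) ≃ Σ a : hf.toFinset, Fin (f a) :=
    { toFun x := ⟨⟨x.1, hf.mem_toFinset.2 x.2.pos.ne'⟩, x.2⟩
      invFun y := ⟨y.1, y.2⟩
      left_inv _ := rfl
      right_inv _ := rfl }
  let _ : Fintype (Σ a, Fin (f a)) := Fintype.ofEquiv _ toSupport.symm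
  have hcard : Fintype.card (Σ a, Fin (f a)) = ∑ᶠ a, f a := by
    rw [Fintype.card_congr toSupport, Fintype.card_sigma,
      finsum_eq_sum_of_support_subset f hf.coe_toFinset.ge]
    simp only [Fintype.card_fin]
    exact Finset.sum_coe_sort _ f
  obtain ⟨e⟩ := Function.Embedding.nonempty_of_card_le (β := Fin n)
    (by rwa [hcard, Fintype.card_fin])
  refine ⟨e, fun k hk => ?_⟩
  simpa [hcard] using Fintype.card_lt_of_injective_of_notMem e e.injective hk

noncomputable def PEquiv.ofSpan {α β γ : Type*} (a : γ ↪ α) (b : γ ↪ β) : α ≃. β where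
  toFun x := (Function.partialInv a x).map b
  invFun y := (Function.partialInv b y).map a
  inv x y := by
    simp only [Option.map_eq_some_iff, a.injective.isPartialInv _ _,
      b.injective.isPartialInv _ _]
    exact exists_congr fun _ => and_comm

namespace PEquiv

variable {α β γ : Type*} {a : γ ↪ α} {b : γ ↪ β} {x : α} {y : β}

lemma ofSpan_eq_some_iff : ofSpan a b x = some y ↔ ∃ t, a t = x ∧ b t = y := by
  change (Function.partialInv a x).map b = some y ↔ _
  simp only [Option.map_eq_some_iff, a.injective.isPartialInv _ _]

lemma ofSpan_eq_none_iff : ofSpan a b x = none ↔ x ∉ Set.range a := by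
  change (Function.partialInv a x).map b = none ↔ _
  simp only [Option.map_eq_none_iff, Set.mem_range, not_exists]
  refine ⟨fun h t ht => ?_, fun h => ?_⟩
  · rw [(a.injective.isPartialInv t x).2 ht] at h
    cases h
  · cases hx : Function.partialInv a x with
    | none => rfl
    | some t => exact absurd ((a.injective.isPartialInv t x).1 hx) (h t)

lemma ofSpan_symm : (ofSpan a b).symm = ofSpan b a := rfl

end PEquiv

namespace Bar

def unshift (I : Bar) (c : ℝ) : Bar := (I.1 - c, I.2 - (c : EReal))

lemma unshift_unshift (I : Bar) (a b : ℝ) : (I.unshift b).unshift a = I.unshift (a + b) := by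
  rcases I with ⟨x, y⟩
  simp only [unshift, Prod.mk.injEq]
  refine ⟨by ring, ?_⟩
  induction y using EReal.rec <;> first | rfl | (norm_cast; ring_nf)

lemma unshift_zero (I : Bar) : I.unshift 0 = I := by
  simp [unshift]

def unshiftEquiv (c : ℝ) : Bar ≃ Bar where
  toFun I := I.unshift c
  invFun I := I.unshift (-c)
  left_inv I := by simp [unshift_unshift, unshift_zero]
  right_inv I := by simp [unshift_unshift, unshift_zero]

lemma len_unshift (I : Bar) (c : ℝ) : (I.unshift c).len = I.len := by
  rcases I with ⟨x, y⟩
  simp only [len, unshift]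
  induction y using EReal.rec <;> first | rfl | (norm_cast; ring_nf)

lemma len_nonpos_of_not_isValid {I : Bar} (h : ¬I.IsValid) : I.len ≤ 0 :=
  EReal.sub_nonpos.2 (not_lt.1 h)

end Bar

namespace barSub

variable {I J K : Bar} {a b : ℝ}

lemma mono (h : barSub I J a) (hab : a ≤ b) : barSub I J b :=
  ⟨by linarith [h.1], h.2.trans (by gcongr)⟩

lemma trans (h : barSub I J a) (h' : barSub J K b) : barSub I K (a + b) := by
  refine ⟨by linarith [h.1, h'.1], ?_⟩
  calc I.2 ≤ J.2 + a := h.2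
    _ ≤ K.2 + b + a := by gcongr; exact h'.2
    _ = K.2 + ((a + b : ℝ) : EReal) := by rw [add_assoc, ← EReal.coe_add, add_comm b]

lemma unshift (h : barSub I J a) (c : ℝ) : barSub (I.unshift c) (J.unshift c) a := by
  refine ⟨by simp only [Bar.unshift]; linarith [h.1], ?_⟩
  simp only [Bar.unshift]
  rw [sub_eq_add_neg, sub_eq_add_neg, add_right_comm, ← EReal.coe_neg]
  exact add_le_add_left h.2 _

lemma top_of_top (h : barSub I J a) (hI : I.2 = ⊤) : J.2 = ⊤ := by
  rcases J with ⟨x, y⟩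
  have := h.2
  rw [hI, top_le_iff] at this
  induction y using EReal.rec with
  | bot => simp at this
  | coe r => exact absurd this (EReal.coe_ne_top _)
  | top => rfl

end barSub

def Bar.Close (I J : Bar) (δ : ℝ) : Prop := barSub I J δ ∧ barSub J I δ

namespace Bar.Close

variable {I J K : Bar} {δ δ' : ℝ}

lemma symm (h : Close I J δ) : Close J I δ := ⟨h.2, h.1⟩

lemma mono (h : Close I J δ) (hδ : δ ≤ δ') : Close I J δ' := ⟨h.1.mono hδ, h.2.mono hδ⟩

lemma trans (h₁ : Close I J δ) (h₂ : Close J K δ') : Close I K (δ + δ') :=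
  ⟨h₁.1.trans h₂.1, add_comm δ' δ ▸ h₂.2.trans h₁.2⟩

lemma unshift (h : Close I J δ) (c : ℝ) : Close (I.unshift c) (J.unshift c) δ :=
  ⟨h.1.unshift c, h.2.unshift c⟩

lemma top_iff (h : Close I J δ) : I.2 = ⊤ ↔ J.2 = ⊤ := ⟨h.1.top_of_top, h.2.top_of_top⟩

lemma len_le (h : Close I J δ) : I.len ≤ J.len + ((2 * δ : ℝ) : EReal) := by
  rcases I with ⟨x, y⟩
  rcases J with ⟨x', y'⟩
  obtain ⟨⟨hx, hy⟩, -⟩ := h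
  calc y - x ≤ (y' + δ) - ((x' - δ : ℝ) : EReal) := EReal.sub_le_sub hy (by exact_mod_cast hx)
    _ = y' - x' + ((2 * δ : ℝ) : EReal) := by
      induction y' using EReal.rec <;> first | rfl | (norm_cast; ring_nf)

lemma len_le_two_mul (h : Close I J δ) (hJ : J.len ≤ ((2 * δ' : ℝ) : EReal)) :
    I.len ≤ ((2 * (δ + δ') : ℝ) : EReal) :=
  calc I.len ≤ J.len + ((2 * δ : ℝ) : EReal) := h.len_le
    _ ≤ ((2 * δ' : ℝ) : EReal) + ((2 * δ : ℝ) : EReal) := by gcongr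
    _ = ((2 * (δ + δ') : ℝ) : EReal) := by norm_cast; ring

end Bar.Close

namespace Bar

variable {I J : Bar} {δ : ℝ}

/-- An infinite right endpoint is recorded as `0`. -/
def coords (I : Bar) : ℝ × ℝ := (I.1, I.2.toReal)

def withCoords (I : Bar) (p : ℝ × ℝ) : Bar := (p.1, if I.2 = ⊤ then ⊤ else (p.2 : EReal))

lemma Close.dist_coords_le (h : Close I J δ) (hI : I.IsValid) : dist I.coords J.coords ≤ δ := by
  rcases I with ⟨x, y⟩
  rcases J with ⟨x', y'⟩
  obtain ⟨⟨h₁, h₂⟩, ⟨h₃, h₄⟩⟩ := h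
  simp only [IsValid] at hI h₁ h₂ h₃ h₄
  rw [coords, coords, Prod.dist_eq, max_le_iff, Real.dist_eq, Real.dist_eq, abs_sub_le_iff,
    abs_sub_le_iff]
  refine ⟨⟨by linarith, by linarith⟩, ?_⟩
  induction y using EReal.rec <;> induction y' using EReal.rec <;>
    simp_all [← EReal.coe_add] <;> first | linarith | constructor <;> linarith

lemma close_withCoords {p : ℝ × ℝ} (hI : I.IsValid) (h : dist I.coords p ≤ δ) :
    Close I (I.withCoords p) δ := by
  rcases I with ⟨x, y⟩
  rcases p with ⟨a, b⟩
  simp only [IsValid] at hI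
  rw [coords, Prod.dist_eq, max_le_iff, Real.dist_eq, Real.dist_eq, abs_sub_le_iff,
    abs_sub_le_iff] at h
  obtain ⟨⟨h₁, h₂⟩, ⟨h₃, h₄⟩⟩ := h
  refine ⟨⟨by simp only [withCoords]; linarith, ?_⟩, ⟨by simp only [withCoords]; linarith, ?_⟩⟩ <;>
  induction y using EReal.rec <;> simp_all [withCoords, ← EReal.coe_add] <;> linarith

lemma IsValid.eventually_lt_len (hI : I.IsValid) (a : ℝ) :
    ∀ᶠ k in atTop, ((a * (1 / 2 : ℝ) ^ k : ℝ) : EReal) < I.len := by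
  have h : Tendsto (fun k => a * (1 / 2 : ℝ) ^ k) atTop (𝓝 0) := by
    simpa using (tendsto_pow_atTop_nhds_zero_of_lt_one (by norm_num : (0 : ℝ) ≤ 1 / 2)
      (by norm_num)).const_mul a
  exact ((continuous_coe_real_ereal.tendsto 0).comp h).eventually_lt_const
    (by rw [EReal.coe_zero]; exact EReal.sub_pos.2 hI)

end Bar

namespace Barcode

@[ext]
lemma ext {B B' : Barcode} (h : ∀ I, B.mult I = B'.mult I) : B = B' := by
  cases B; cases B'
  simp only [mk.injEq]
  exact funext h

lemma shift_mult (B : Barcode) (c : ℝ) (I : Bar) : (B.shift c).mult I = B.mult (I.unshift c) :=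
  rfl

lemma shift_shift (B : Barcode) (a b : ℝ) : (B.shift a).shift b = B.shift (a + b) := by
  ext I
  rw [shift_mult, shift_mult, shift_mult, Bar.unshift_unshift, add_comm]

lemma shift_zero (B : Barcode) : B.shift 0 = B := by
  ext I
  rw [shift_mult, Bar.unshift_zero]

lemma QTame.shift {B : Barcode} (hB : B.QTame) (c : ℝ) : (B.shift c).QTame := fun ε hε =>
  (hB ε hε).preimage (Bar.unshiftEquiv c).injective.injOn |>.subset fun I hI => by
    show B.mult (I.unshift c) ≠ 0 ∧ (ε : EReal) ≤ (I.unshift c).len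
    rwa [Bar.len_unshift]

section

variable {B B' : Barcode} {δ δ' : ℝ} {m : Bar → Bar → ℕ}

lemma IsMatching.mono (h : IsMatching B B' δ m) (hδ : δ ≤ δ') : IsMatching B B' δ' m := by
  obtain ⟨f₁, f₂, s₁, s₂, d₁, d₂, cl⟩ := h
  have h2 : ((2 * δ : ℝ) : EReal) ≤ ((2 * δ' : ℝ) : EReal) := by exact_mod_cast (by linarith)
  exact ⟨f₁, f₂, s₁, s₂, fun I hI => (d₁ I hI).trans h2, fun J hJ => (d₂ J hJ).trans h2,
    fun I J hm => Bar.Close.mono (cl I J hm) hδ⟩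

lemma HasMatching.mono (h : HasMatching B B' δ) (hδ : δ ≤ δ') : HasMatching B B' δ' :=
  h.imp fun _ hm => hm.mono hδ

lemma IsMatching.shift (h : IsMatching B B' δ m) (c : ℝ) :
    IsMatching (B.shift c) (B'.shift c) δ fun I J : Bar => m (I.unshift c) (J.unshift c) := by
  obtain ⟨f₁, f₂, s₁, s₂, d₁, d₂, cl⟩ := h
  let e := Bar.unshiftEquiv c
  have row : ∀ I : Bar, ∑ᶠ J : Bar, m (I.unshift c) (J.unshift c) = ∑ᶠ J, m (I.unshift c) J :=
    fun I => finsum_comp_equiv e (f := m (I.unshift c))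
  have col : ∀ J : Bar, ∑ᶠ I : Bar, m (I.unshift c) (J.unshift c) = ∑ᶠ I, m I (J.unshift c) :=
    fun J => finsum_comp_equiv e (f := fun I => m I (J.unshift c))
  refine ⟨fun I => (f₁ _).preimage e.injective.injOn, fun J => (f₂ _).preimage e.injective.injOn,
    fun I => row I ▸ s₁ _, fun J => col J ▸ s₂ _, fun I hI => ?_, fun J hJ => ?_, fun I J hm => ?_⟩
  · simpa [Bar.len_unshift] using d₁ (I.unshift c) (by rwa [row I] at hI)
  · simpa [Bar.len_unshift] using d₂ (J.unshift c) (by rwa [col J] at hJ)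
  · simpa [Bar.Close, Bar.unshift_unshift, Bar.unshift_zero] using
      Bar.Close.unshift (cl _ _ hm) (-c)

lemma HasMatching.shift (h : HasMatching B B' δ) (c : ℝ) :
    HasMatching (B.shift c) (B'.shift c) δ :=
  let ⟨_, hm⟩ := h
  ⟨_, hm.shift c⟩

lemma bottleneck_le (hδ : 0 ≤ δ) (h : HasMatching B B' δ) : bottleneck B B' ≤ δ :=
  sInf_le ⟨δ, hδ, rfl, h⟩

lemma exists_hasMatching_of_bottleneck_lt {ε : ℝ} (h : bottleneck B B' < ε) :
    ∃ δ : ℝ, 0 ≤ δ ∧ δ < ε ∧ HasMatching B B' δ := by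
  obtain ⟨-, ⟨δ, hδ, rfl, hm⟩, hlt⟩ := sInf_lt_iff.1 h
  exact ⟨δ, hδ, EReal.coe_lt_coe_iff.1 hlt, hm⟩

lemma exists_hasMatching_of_qdist_lt {ε : ℝ} (h : qdist B B' < ε) :
    ∃ c δ : ℝ, 0 ≤ δ ∧ δ < ε ∧ HasMatching B (B'.shift c) δ := by
  obtain ⟨-, ⟨c, rfl⟩, hlt⟩ := sInf_lt_iff.1 h
  obtain ⟨δ, hδ, hδε, hm⟩ := exists_hasMatching_of_bottleneck_lt hlt
  exact ⟨c, δ, hδ, hδε, hm⟩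

lemma qdist_le_of_hasMatching (c : ℝ) (hδ : 0 ≤ δ) (h : HasMatching B (B'.shift c) δ) :
    qdist B B' ≤ δ :=
  (sInf_le ⟨c, rfl⟩ : qdist B B' ≤ _).trans (bottleneck_le hδ h)

end

abbrev Copy (B : Barcode) : Type := Σ I : Bar, Fin (B.mult I)

lemma Copy.setOf_fst_eq (B : Barcode) (I : Bar) :
    {c : B.Copy | c.1 = I} = Set.range (Sigma.mk I) := by
  ext ⟨J, k⟩
  constructor
  · rintro rfl
    exact ⟨k, rfl⟩
  · rintro ⟨k, h⟩
    cases h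
    rfl

lemma Copy.finite_fst_eq (B : Barcode) (I : Bar) : {c : B.Copy | c.1 = I}.Finite := by
  rw [Copy.setOf_fst_eq]
  exact Set.finite_range _

lemma Copy.ncard_fst_eq (B : Barcode) (I : Bar) : {c : B.Copy | c.1 = I}.ncard = B.mult I := by
  rw [Copy.setOf_fst_eq, ← Set.image_univ, Set.ncard_image_of_injective _ sigma_mk_injective,
    Set.ncard_univ, Nat.card_eq_fintype_card, Fintype.card_fin]

lemma Copy.isValid {B : Barcode} (c : B.Copy) : c.1.IsValid := B.valid c.1 c.2.pos.ne'

lemma Copy.finite_fst_mem (B : Barcode) {S : Set Bar} (hS : S.Finite) :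
    {c : B.Copy | c.1 ∈ S}.Finite :=
  (hS.biUnion fun I _ => Copy.finite_fst_eq B I).subset fun _ hc => Set.mem_biUnion hc rfl

structure IsCopyMatching {B B' : Barcode} (σ : B.Copy ≃. B'.Copy) (δ : ℝ) : Prop where
  len_le_of_eq_none : ∀ c, σ c = none → c.1.len ≤ ((2 * δ : ℝ) : EReal)
  len_le_of_symm_eq_none : ∀ d, σ.symm d = none → d.1.len ≤ ((2 * δ : ℝ) : EReal)
  close : ∀ c d, σ c = some d → c.1.Close d.1 δ

namespace IsCopyMatching

variable {B₁ B₂ B₃ : Barcode} {σ : B₁.Copy ≃. B₂.Copy} {τ : B₂.Copy ≃. B₃.Copy} {δ δ' : ℝ}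

lemma symm (h : IsCopyMatching σ δ) : IsCopyMatching σ.symm δ :=
  ⟨h.len_le_of_symm_eq_none, h.len_le_of_eq_none,
    fun c d hcd => (h.close d c (σ.eq_some_iff.1 hcd)).symm⟩

lemma len_le_of_trans_eq_none (hσ : IsCopyMatching σ δ) (hτ : IsCopyMatching τ δ')
    (hδ' : 0 ≤ δ') {c : B₁.Copy} (h : σ.trans τ c = none) :
    c.1.len ≤ ((2 * (δ + δ') : ℝ) : EReal) := by
  cases hc : σ c with
  | none => exact (hσ.len_le_of_eq_none c hc).trans (by exact_mod_cast (by linarith))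
  | some e =>
    have he : (σ c).bind τ = none := h
    rw [hc, Option.bind_some] at he
    exact (hσ.close c e hc).len_le_two_mul (hτ.len_le_of_eq_none e he)

lemma trans (hσ : IsCopyMatching σ δ) (hτ : IsCopyMatching τ δ') (hδ : 0 ≤ δ) (hδ' : 0 ≤ δ') :
    IsCopyMatching (σ.trans τ) (δ + δ') where
  len_le_of_eq_none _ h := hσ.len_le_of_trans_eq_none hτ hδ' h
  len_le_of_symm_eq_none d h := by
    rw [PEquiv.symm_trans_rev] at h
    rw [add_comm]
    exact hτ.symm.len_le_of_trans_eq_none hσ.symm hδ h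
  close c d h := by
    obtain ⟨e, hce, hed⟩ := (PEquiv.trans_eq_some _ _ _ _).1 h
    exact (hσ.close c e hce).trans (hτ.close e d hed)

end IsCopyMatching

section

variable {B B' : Barcode} {δ : ℝ}

/-- The matching counts each `c` with `f c = some J` as a copy of `c.1` matched to `J`. -/
theorem hasMatching_of_partialMap (f : B.Copy → Option Bar)
    (hfin : ∀ J, (f ⁻¹' {some J}).Finite)
    (hcard : ∀ J, (f ⁻¹' {some J}).ncard ≤ B'.mult J)
    (hnone : ∀ c, f c = none → c.1.len ≤ ((2 * δ : ℝ) : EReal))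
    (hshort : ∀ J, (f ⁻¹' {some J}).ncard < B'.mult J → J.len ≤ ((2 * δ : ℝ) : EReal))
    (hclose : ∀ c J, f c = some J → c.1.Close J δ) :
    HasMatching B B' δ := by
  let copies (I : Bar) : Set B.Copy := {c | c.1 = I}
  let m (I J : Bar) : ℕ := (copies I ∩ f ⁻¹' {some J}).ncard
  have hrowfin (I : Bar) : {J | m I J ≠ 0}.Finite := by
    refine (((Copy.finite_fst_eq B I).image f).preimage (Option.some_injective _).injOn).subset ?_
    intro J hJ
    obtain ⟨c, hc, hcJ⟩ := Set.nonempty_of_ncard_ne_zero hJ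
    exact ⟨c, hc, hcJ⟩
  have hrow (I : Bar) : B.mult I = (copies I ∩ f ⁻¹' {none}).ncard + ∑ᶠ J, m I J := by
    rw [← Copy.ncard_fst_eq B I, ← (Copy.finite_fst_eq B I).finsum_ncard_inter_preimage f,
      finsum_option]
    exact hrowfin I
  have hcol (J : Bar) : ∑ᶠ I, m I J = (f ⁻¹' {some J}).ncard := by
    rw [← (hfin J).finsum_ncard_inter_preimage Sigma.fst]
    exact finsum_congr fun I => by rw [Set.inter_comm]; rfl
  refine ⟨m, hrowfin, fun J => ?_, fun I => ?_, fun J => ?_, fun I hI => ?_,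
    fun J hJ => hshort J (hcol J ▸ hJ), fun I J hIJ => ?_⟩
  · refine ((hfin J).image Sigma.fst).subset fun I hI => ?_
    obtain ⟨c, hc, hcJ⟩ := Set.nonempty_of_ncard_ne_zero hI
    exact ⟨c, hcJ, hc⟩
  · rw [hrow I]
    exact Nat.le_add_left _ _
  · exact hcol J ▸ hcard J
  · rw [hrow I, Nat.lt_add_left_iff_pos, Nat.pos_iff_ne_zero] at hI
    obtain ⟨c, rfl, hc⟩ := Set.nonempty_of_ncard_ne_zero hI
    exact hnone c hc
  · obtain ⟨c, rfl, hc⟩ := Set.nonempty_of_ncard_ne_zero hIJ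
    exact hclose c J hc

lemma IsCopyMatching.hasMatching {σ : B.Copy ≃. B'.Copy} (hσ : IsCopyMatching σ δ) :
    HasMatching B B' δ := by
  let f (c : B.Copy) : Option Bar := (σ c).map Sigma.fst
  have hmaps (J : Bar) : Set.MapsTo σ (f ⁻¹' {some J}) (some '' {d | d.1 = J}) := fun c hc => by
    obtain ⟨d, hd, rfl⟩ := Option.map_eq_some_iff.1 hc
    exact ⟨d, rfl, hd.symm⟩
  have hinj (J : Bar) : Set.InjOn σ (f ⁻¹' {some J}) := fun c hc c' _ h => by
    obtain ⟨d, hd, -⟩ := Option.map_eq_some_iff.1 hc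
    exact σ.inj hd (h ▸ hd)
  have hfin (J : Bar) : (f ⁻¹' {some J}).Finite :=
    Set.Finite.of_injOn (hmaps J) (hinj J) ((Copy.finite_fst_eq B' J).image _)
  have hcard (J : Bar) : (σ '' (f ⁻¹' {some J})).ncard = (f ⁻¹' {some J}).ncard :=
    (hinj J).ncard_image
  have hcopies (J : Bar) : (some '' {d : B'.Copy | d.1 = J}).ncard = B'.mult J := by
    rw [Set.ncard_image_of_injective _ (Option.some_injective _), Copy.ncard_fst_eq]
  refine hasMatching_of_partialMap f hfin (fun J => ?_) (fun c hc => ?_) (fun J hJ => ?_)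
    (fun c J hc => ?_)
  · rw [← hcard, ← hcopies]
    exact Set.ncard_le_ncard (Set.image_subset_iff.2 (hmaps J))
      ((Copy.finite_fst_eq B' J).image _)
  · exact hσ.len_le_of_eq_none c (Option.map_eq_none_iff.1 hc)
  · rw [← hcard, ← hcopies] at hJ
    obtain ⟨_, ⟨d, rfl, rfl⟩, hd⟩ := Set.exists_mem_notMem_of_ncard_lt_ncard hJ
      ((hfin _).image _)
    refine hσ.len_le_of_symm_eq_none d (Option.eq_none_iff_forall_ne_some.2 fun c hc => hd ?_)
    have hcd := σ.eq_some_iff.1 hc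
    exact ⟨c, by simp [f, hcd], hcd⟩
  · obtain ⟨d, hd, rfl⟩ := Option.map_eq_some_iff.1 hc
    exact hσ.close c d hd

lemma HasMatching.exists_isCopyMatching (h : HasMatching B B' δ) :
    ∃ σ : B.Copy ≃. B'.Copy, IsCopyMatching σ δ := by
  obtain ⟨m, f₁, f₂, s₁, s₂, d₁, d₂, cl⟩ := h
  choose ρ hρ using fun I => exists_sigmaFin_embedding (f₁ I) (s₁ I)
  choose ι hι using fun J => exists_sigmaFin_embedding (f := fun I => m I J) (f₂ J) (s₂ J)
  -- The `m I J` matched pairs are laid out among the copies of `I` by `ρ` and among the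
  -- copies of `J` by `ι`; a copy outside these layouts lies in a row or column that is not full.
  let swap : (Σ I J, Fin (m I J)) ≃ Σ J I, Fin (m I J) :=
    { toFun x := ⟨x.2.1, x.1, x.2.2⟩
      invFun y := ⟨y.2.1, y.1, y.2.2⟩
      left_inv _ := rfl
      right_inv _ := rfl }
  let a : (Σ I J, Fin (m I J)) ↪ B.Copy := .sigmaMap (.refl _) ρ
  let b : (Σ I J, Fin (m I J)) ↪ B'.Copy := swap.toEmbedding.trans (.sigmaMap (.refl _) ι)
  refine ⟨PEquiv.ofSpan a b, fun c hc => ?_, fun d hd => ?_, fun c d hcd => ?_⟩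
  · rw [PEquiv.ofSpan_eq_none_iff] at hc
    exact d₁ c.1 (hρ c.1 c.2 fun ⟨x, hx⟩ => hc ⟨⟨c.1, x⟩, Sigma.ext rfl (heq_of_eq hx)⟩)
  · rw [PEquiv.ofSpan_symm, PEquiv.ofSpan_eq_none_iff] at hd
    exact d₂ d.1 (hι d.1 d.2 fun ⟨⟨I, k⟩, hx⟩ => hd ⟨⟨I, d.1, k⟩, Sigma.ext rfl (heq_of_eq hx)⟩)
  · obtain ⟨⟨I, J, k⟩, rfl, rfl⟩ := PEquiv.ofSpan_eq_some_iff.1 hcd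
    exact cl I J k.pos.ne'

end

section

variable {B₁ B₂ B₃ : Barcode} {δ δ' : ℝ}

lemma HasMatching.trans (h₁ : HasMatching B₁ B₂ δ) (h₂ : HasMatching B₂ B₃ δ') (hδ : 0 ≤ δ)
    (hδ' : 0 ≤ δ') : HasMatching B₁ B₃ (δ + δ') := by
  obtain ⟨σ, hσ⟩ := h₁.exists_isCopyMatching
  obtain ⟨τ, hτ⟩ := h₂.exists_isCopyMatching
  exact (hσ.trans hτ hδ hδ').hasMatching

lemma qdist_lt_add {a b : ℝ} (h₁₂ : qdist B₁ B₂ < a) (h₂₃ : qdist B₂ B₃ < b) :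
    qdist B₁ B₃ < ((a + b : ℝ) : EReal) := by
  obtain ⟨c₁, δ₁, hδ₁, hδ₁a, hm₁⟩ := exists_hasMatching_of_qdist_lt h₁₂
  obtain ⟨c₂, δ₂, hδ₂, hδ₂b, hm₂⟩ := exists_hasMatching_of_qdist_lt h₂₃
  have hm₂' := hm₂.shift c₁
  rw [shift_shift] at hm₂'
  calc qdist B₁ B₃ ≤ ((δ₁ + δ₂ : ℝ) : EReal) :=
        qdist_le_of_hasMatching _ (by positivity) (hm₁.trans hm₂' hδ₁ hδ₂)
    _ < ((a + b : ℝ) : EReal) := by exact_mod_cast (by linarith)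

end

structure CopyChain where
  barcode : ℕ → Barcode
  σ : ∀ k, (barcode k).Copy ≃. (barcode (k + 1)).Copy
  isCopyMatching : ∀ k, IsCopyMatching (σ k) ((1 / 2 : ℝ) ^ k)

namespace CopyChain

variable (C : CopyChain)

abbrev Node : Type := Σ k, (C.barcode k).Copy

variable {C}

def Node.bar (c : C.Node) : Bar := c.2.1

lemma Node.isValid (c : C.Node) : c.bar.IsValid := c.2.isValid

variable (C)

def step (c : C.Node) : Option C.Node := (C.σ c.1 c.2).map (⟨c.1 + 1, ·⟩)

def iter : ℕ → C.Node → Option C.Node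
  | 0, c => some c
  | n + 1, c => (C.step c).bind (iter n)

def Immortal (c : C.Node) : Prop := ∀ n, (C.iter n c).isSome

variable {C} {c d : C.Node}

lemma step_fst (h : C.step c = some d) : d.1 = c.1 + 1 := by
  obtain ⟨_, -, rfl⟩ := Option.map_eq_some_iff.1 h
  rfl

lemma close_of_step (h : C.step c = some d) : c.bar.Close d.bar ((1 / 2 : ℝ) ^ c.1) := by
  obtain ⟨e, he, rfl⟩ := Option.map_eq_some_iff.1 h
  exact (C.isCopyMatching c.1).close _ _ he

lemma iter_succ_of_step (h : C.step c = some d) (n : ℕ) : C.iter (n + 1) c = C.iter n d := by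
  simp only [iter, h, Option.bind_some]

lemma immortal_iff_of_step (h : C.step c = some d) : C.Immortal c ↔ C.Immortal d :=
  ⟨fun hc n => iter_succ_of_step h n ▸ hc (n + 1),
    fun hd n => n.casesOn rfl fun n => (iter_succ_of_step h n).symm ▸ hd n⟩

lemma Immortal.exists_step (hc : C.Immortal c) : ∃ d, C.step c = some d := by
  have := hc 1
  simp only [iter, Option.isSome_iff_exists, Option.bind_eq_some_iff] at this
  obtain ⟨_, d, hd, -⟩ := this
  exact ⟨d, hd⟩

lemma len_le_of_iter_eq_none {n : ℕ} (h : C.iter n c = none) :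
    c.bar.len ≤ ((4 * (1 / 2 : ℝ) ^ c.1 : ℝ) : EReal) := by
  induction n generalizing c with
  | zero => cases h
  | succ n ih =>
    cases hc : C.step c with
    | none =>
      have hσ : C.σ c.1 c.2 = none := Option.map_eq_none_iff.1 hc
      refine ((C.isCopyMatching c.1).len_le_of_eq_none _ hσ).trans ?_
      exact_mod_cast (by nlinarith [pow_pos (by norm_num : (0 : ℝ) < 1 / 2) c.1])
    | some d =>
      have hd : d.bar.len ≤ ((2 * (1 / 2 : ℝ) ^ c.1 : ℝ) : EReal) := by
        convert ih (by rwa [← iter_succ_of_step hc]) using 2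
        rw [step_fst hc, pow_succ]
        ring
      calc c.bar.len ≤ ((2 * ((1 / 2 : ℝ) ^ c.1 + (1 / 2) ^ c.1) : ℝ) : EReal) :=
            (close_of_step hc).len_le_two_mul hd
        _ = ((4 * (1 / 2 : ℝ) ^ c.1 : ℝ) : EReal) := by congr 1; ring

lemma len_le_of_not_immortal (h : ¬C.Immortal c) :
    c.bar.len ≤ ((4 * (1 / 2 : ℝ) ^ c.1 : ℝ) : EReal) := by
  obtain ⟨n, hn⟩ := not_forall.1 h
  exact len_le_of_iter_eq_none (Option.not_isSome_iff_eq_none.1 hn)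

variable (C)

/-- Junk value `0` once the chain through `c` stops. -/
def ends (c : C.Node) (n : ℕ) : ℝ × ℝ := ((C.iter n c).map fun d => d.bar.coords).getD 0

noncomputable def limCoords (c : C.Node) : ℝ × ℝ := limUnder atTop (C.ends c)

noncomputable def limBar (c : C.Node) : Bar := c.bar.withCoords (C.limCoords c)

variable {C}

lemma ends_zero (c : C.Node) : C.ends c 0 = c.bar.coords := rfl

lemma ends_succ_of_step (h : C.step c = some d) (n : ℕ) : C.ends c (n + 1) = C.ends d n := by
  simp only [ends, iter_succ_of_step h]

lemma Immortal.dist_ends_le (hc : C.Immortal c) (n : ℕ) :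
    dist (C.ends c n) (C.ends c (n + 1)) ≤ (1 / 2 : ℝ) ^ c.1 * (1 / 2) ^ n := by
  induction n generalizing c with
  | zero =>
    obtain ⟨d, hd⟩ := hc.exists_step
    rw [ends_succ_of_step hd, ends_zero, ends_zero, pow_zero, mul_one]
    exact (close_of_step hd).dist_coords_le c.isValid
  | succ n ih =>
    obtain ⟨d, hd⟩ := hc.exists_step
    rw [ends_succ_of_step hd, ends_succ_of_step hd]
    convert ih ((immortal_iff_of_step hd).1 hc) using 1
    rw [step_fst hd, pow_succ, pow_succ]
    ring

lemma Immortal.tendsto_ends (hc : C.Immortal c) :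
    Tendsto (C.ends c) atTop (𝓝 (C.limCoords c)) :=
  (cauchySeq_of_le_geometric (1 / 2) _ (by norm_num) hc.dist_ends_le).tendsto_limUnder

lemma Immortal.close_limBar (hc : C.Immortal c) :
    c.bar.Close (C.limBar c) (2 * (1 / 2 : ℝ) ^ c.1) := by
  refine Bar.close_withCoords c.isValid ?_
  convert dist_le_of_le_geometric_of_tendsto₀ (1 / 2) _ (by norm_num) hc.dist_ends_le
    hc.tendsto_ends using 1
  · rfl
  · norm_num
    ring

lemma limBar_eq_of_step (hc : C.Immortal c) (h : C.step c = some d) :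
    C.limBar d = C.limBar c := by
  have hd := (immortal_iff_of_step h).1 hc
  have hlim : C.limCoords d = C.limCoords c := by
    refine tendsto_nhds_unique hd.tendsto_ends ?_
    simpa only [ends_succ_of_step h] using (tendsto_add_atTop_iff_nat 1).2 hc.tendsto_ends
  simp only [limBar, Bar.withCoords, hlim, (close_of_step h).top_iff]

lemma Immortal.len_le_of_not_isValid (hc : C.Immortal c) (h : ¬(C.limBar c).IsValid) :
    c.bar.len ≤ ((4 * (1 / 2 : ℝ) ^ c.1 : ℝ) : EReal) :=
  calc c.bar.len ≤ (C.limBar c).len + ((2 * (2 * (1 / 2 : ℝ) ^ c.1) : ℝ) : EReal) :=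
        hc.close_limBar.len_le
    _ ≤ 0 + ((2 * (2 * (1 / 2 : ℝ) ^ c.1) : ℝ) : EReal) := by
        gcongr
        exact Bar.len_nonpos_of_not_isValid h
    _ = ((4 * (1 / 2 : ℝ) ^ c.1 : ℝ) : EReal) := by rw [zero_add]; congr 1; ring

variable {c' : C.Node} {k l : ℕ} {B : Bar}

lemma step_injective (hlvl : c.1 = c'.1) (h : C.step c = some d) (h' : C.step c' = some d) :
    c = c' := by
  obtain ⟨k, x⟩ := c
  obtain ⟨k', x'⟩ := c'
  obtain rfl : k = k' := hlvl
  obtain ⟨e, he, rfl⟩ := Option.map_eq_some_iff.1 h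
  obtain ⟨e', he', hee⟩ := Option.map_eq_some_iff.1 h'
  obtain rfl := sigma_mk_injective hee
  exact congrArg (Sigma.mk k) ((C.σ k).inj (a₁ := x) (a₂ := x') he he')

lemma finite_level_len_ge (hq : (C.barcode l).QTame) {ε : ℝ} (hε : 0 < ε) :
    {c : C.Node | c.1 = l ∧ (ε : EReal) ≤ c.bar.len}.Finite := by
  refine ((Copy.finite_fst_mem _ (hq ε hε)).image (Sigma.mk l)).subset ?_
  rintro ⟨k, x⟩ ⟨rfl, hx⟩
  exact ⟨x, ⟨x.2.pos.ne', hx⟩, rfl⟩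

variable (C)

def limFiber (k : ℕ) (B : Bar) : Set C.Node := {c | c.1 = k ∧ C.Immortal c ∧ C.limBar c = B}

def next (c : C.Node) : C.Node := (C.step c).getD c

variable {C}

lemma mapsTo_next (k : ℕ) (B : Bar) :
    Set.MapsTo C.next (C.limFiber k B) (C.limFiber (k + 1) B) := by
  rintro c ⟨rfl, hc, hB⟩
  obtain ⟨d, hd⟩ := hc.exists_step
  rw [next, hd, Option.getD_some]
  exact ⟨step_fst hd, (immortal_iff_of_step hd).1 hc, (limBar_eq_of_step hc hd).trans hB⟩

lemma injOn_next (k : ℕ) (B : Bar) : Set.InjOn C.next (C.limFiber k B) := by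
  rintro c ⟨hck, hc, -⟩ c' ⟨hc'k, hc', -⟩ h
  obtain ⟨d, hd⟩ := hc.exists_step
  obtain ⟨d', hd'⟩ := hc'.exists_step
  rw [next, next, hd, hd', Option.getD_some, Option.getD_some] at h
  exact step_injective (hck.trans hc'k.symm) hd (h ▸ hd')

lemma limFiber_succ_subset (hB : ((4 * (1 / 2 : ℝ) ^ k : ℝ) : EReal) < B.len) :
    C.limFiber (k + 1) B ⊆ C.next '' C.limFiber k B := by
  rintro ⟨l, y⟩ ⟨rfl, hy, rfl⟩
  cases hx : (C.σ k).symm y with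
  | none =>
    -- a copy that is unmatched from below is too short to converge to `B`
    have hlen := (C.isCopyMatching k).len_le_of_symm_eq_none y hx
    have := (hy.close_limBar.symm.len_le).trans (add_le_add_left hlen _)
    refine absurd (hB.trans_le (this.trans_eq ?_)) (lt_irrefl _)
    rw [← EReal.coe_add]
    congr 1
    rw [pow_succ]
    ring
  | some x =>
    have hstep : C.step ⟨k, x⟩ = some ⟨k + 1, y⟩ := by
      simp only [step, (C.σ k).eq_some_iff.1 hx]
      rfl
    have hc := (immortal_iff_of_step hstep).2 hy
    refine ⟨⟨k, x⟩, ⟨rfl, hc, (limBar_eq_of_step hc hstep).symm⟩, ?_⟩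
    simp only [next, hstep, Option.getD_some]

lemma len_ge_of_mem_limFiber (hc : c ∈ C.limFiber k B)
    (hB : ((8 * (1 / 2 : ℝ) ^ k : ℝ) : EReal) ≤ B.len) :
    ((4 * (1 / 2 : ℝ) ^ k : ℝ) : EReal) ≤ c.bar.len := by
  obtain ⟨rfl, hc, rfl⟩ := hc
  refine EReal.coe_le_of_two_mul_le_of_le_add (by convert hB using 2; ring) ?_
  convert hc.close_limBar.symm.len_le using 3
  ring

lemma finite_limFiber (hq : ∀ k, (C.barcode k).QTame) (hB : B.IsValid) (k : ℕ) :
    (C.limFiber k B).Finite := by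
  obtain ⟨l, hkl, hl⟩ := ((eventually_ge_atTop k).and (hB.eventually_lt_len 8)).exists
  have hfin : (C.limFiber l B).Finite :=
    (finite_level_len_ge (hq l) (by positivity)).subset fun c hc =>
      ⟨hc.1, len_ge_of_mem_limFiber hc hl.le⟩
  obtain ⟨n, rfl⟩ := Nat.exists_eq_add_of_le hkl
  clear hkl hl
  induction n generalizing k with
  | zero => exact hfin
  | succ n ih =>
    refine Set.Finite.of_injOn (mapsTo_next k B) (injOn_next k B) (ih (k + 1) ?_)
    convert hfin using 2
    omega

lemma monotone_ncard_limFiber (hq : ∀ k, (C.barcode k).QTame) (hB : B.IsValid) :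
    Monotone fun k => (C.limFiber k B).ncard :=
  monotone_nat_of_le_succ fun k =>
    Set.ncard_le_ncard_of_injOn _ (mapsTo_next k B) (injOn_next k B) (finite_limFiber hq hB _)

lemma ncard_limFiber_succ (hq : ∀ k, (C.barcode k).QTame) (hB : B.IsValid)
    (hk : ((4 * (1 / 2 : ℝ) ^ k : ℝ) : EReal) < B.len) :
    (C.limFiber (k + 1) B).ncard = (C.limFiber k B).ncard :=
  le_antisymm
    ((Set.ncard_le_ncard (limFiber_succ_subset hk)
      ((finite_limFiber hq hB k).image _)).trans_eq (injOn_next k B).ncard_image)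
    (monotone_ncard_limFiber hq hB k.le_succ)

lemma ncard_limFiber_eq_of_le (hq : ∀ k, (C.barcode k).QTame) (hB : B.IsValid)
    (hk : ((4 * (1 / 2 : ℝ) ^ k : ℝ) : EReal) < B.len) (hkl : k ≤ l) :
    (C.limFiber l B).ncard = (C.limFiber k B).ncard := by
  induction l, hkl using Nat.le_induction with
  | base => rfl
  | succ l hkl ih =>
    refine (ncard_limFiber_succ hq hB (lt_of_le_of_lt ?_ hk)).trans ih
    exact EReal.coe_le_coe_iff.2 (mul_le_mul_of_nonneg_left
      (pow_le_pow_of_le_one (a := (1 / 2 : ℝ)) (by norm_num) (by norm_num) hkl) (by norm_num))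

variable (C)

/-- The number of chains converging to `B`; it is eventually constant in the level. -/
noncomputable def limMult (B : Bar) : ℕ :=
  if B.IsValid then ⨆ k, (C.limFiber k B).ncard else 0

noncomputable def limBarcode : Barcode where
  mult := C.limMult
  valid B h := by
    by_contra hB
    exact h (if_neg hB)

variable {C}

lemma limMult_eq (hq : ∀ k, (C.barcode k).QTame) (hB : B.IsValid)
    (hk : ((4 * (1 / 2 : ℝ) ^ k : ℝ) : EReal) < B.len) :
    C.limMult B = (C.limFiber k B).ncard := by
  have hle (l : ℕ) : (C.limFiber l B).ncard ≤ (C.limFiber k B).ncard :=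
    (monotone_ncard_limFiber hq hB (le_max_left l k)).trans_eq
      (ncard_limFiber_eq_of_le hq hB hk (le_max_right l k))
  rw [limMult, if_pos hB]
  exact le_antisymm (ciSup_le hle) (le_ciSup ⟨_, Set.forall_mem_range.2 hle⟩ k)

lemma ncard_limFiber_le_limMult (hq : ∀ k, (C.barcode k).QTame) (hB : B.IsValid) (k : ℕ) :
    (C.limFiber k B).ncard ≤ C.limMult B := by
  obtain ⟨l, hkl, hl⟩ := ((eventually_ge_atTop k).and (hB.eventually_lt_len 4)).exists
  exact (monotone_ncard_limFiber hq hB hkl).trans_eq (limMult_eq hq hB hl).symm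

lemma qTame_limBarcode (hq : ∀ k, (C.barcode k).QTame) : C.limBarcode.QTame := by
  intro ε hε
  obtain ⟨l, hl⟩ : ∃ l, 8 * (1 / 2 : ℝ) ^ l < ε := by
    obtain ⟨l, hl⟩ := exists_pow_lt_of_lt_one (by positivity : 0 < ε / 8)
      (by norm_num : (1 / 2 : ℝ) < 1)
    exact ⟨l, by linarith⟩
  refine ((finite_level_len_ge (hq l) (by positivity : (0 : ℝ) < 4 * (1 / 2) ^ l)).image
    C.limBar).subset ?_
  rintro B ⟨hB0, hεB⟩
  have hB := C.limBarcode.valid B hB0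
  have h8 : ((8 * (1 / 2 : ℝ) ^ l : ℝ) : EReal) ≤ B.len := (EReal.coe_le_coe_iff.2 hl.le).trans hεB
  have h4 : ((4 * (1 / 2 : ℝ) ^ l : ℝ) : EReal) < B.len :=
    (EReal.coe_lt_coe_iff.2 (by linarith [pow_pos (by norm_num : (0 : ℝ) < 1 / 2) l])).trans_le h8
  change C.limMult B ≠ 0 at hB0
  rw [limMult_eq hq hB h4] at hB0
  obtain ⟨c, hc⟩ := Set.nonempty_of_ncard_ne_zero hB0
  exact ⟨c, ⟨hc.1, len_ge_of_mem_limFiber hc h8⟩, hc.2.2⟩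

variable (C) in
noncomputable def limMatch (k : ℕ) (x : (C.barcode k).Copy) : Option Bar :=
  if C.Immortal ⟨k, x⟩ ∧ (C.limBar ⟨k, x⟩).IsValid then some (C.limBar ⟨k, x⟩) else none

lemma limMatch_preimage (hB : B.IsValid) :
    C.limMatch k ⁻¹' {some B} = Sigma.mk k ⁻¹' C.limFiber k B := by
  ext x
  simp only [limMatch, limFiber, Set.mem_preimage, Set.mem_singleton_iff, Set.mem_ofPred_eq]
  split_ifs with h
  · simp [h.1]
  · simp only [false_iff, true_and]
    rintro ⟨hi, rfl⟩
    exact h ⟨hi, hB⟩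

lemma limMatch_preimage_of_not_isValid (hB : ¬B.IsValid) : C.limMatch k ⁻¹' {some B} = ∅ := by
  ext x
  simp only [limMatch, Set.mem_preimage, Set.mem_singleton_iff, Set.mem_empty_iff_false,
    iff_false]
  split_ifs with h
  · rintro ⟨⟩
    exact hB h.2
  · exact not_false

lemma ncard_limMatch_preimage (hB : B.IsValid) :
    (C.limMatch k ⁻¹' {some B}).ncard = (C.limFiber k B).ncard := by
  rw [limMatch_preimage hB]
  refine Set.ncard_preimage_of_injective_subset_range sigma_mk_injective ?_
  rintro ⟨l, x⟩ ⟨rfl, -⟩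
  exact ⟨x, rfl⟩

theorem hasMatching_limBarcode (hq : ∀ k, (C.barcode k).QTame) (k : ℕ) :
    HasMatching (C.barcode k) C.limBarcode (2 * (1 / 2 : ℝ) ^ k) := by
  have h4 : ((2 * (2 * (1 / 2 : ℝ) ^ k) : ℝ) : EReal) = ((4 * (1 / 2 : ℝ) ^ k : ℝ) : EReal) := by
    congr 1
    ring
  refine hasMatching_of_partialMap (C.limMatch k) (fun B => ?_) (fun B => ?_) (fun x hx => ?_)
    (fun B hB => ?_) (fun x B hx => ?_)
  · by_cases hB : B.IsValid
    · rw [limMatch_preimage hB]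
      exact (finite_limFiber hq hB k).preimage sigma_mk_injective.injOn
    · rw [limMatch_preimage_of_not_isValid hB]
      exact Set.finite_empty
  · by_cases hB : B.IsValid
    · rw [ncard_limMatch_preimage hB]
      exact ncard_limFiber_le_limMult hq hB k
    · rw [limMatch_preimage_of_not_isValid hB, Set.ncard_empty]
      exact Nat.zero_le _
  · rw [h4]
    by_cases hi : C.Immortal ⟨k, x⟩
    · exact hi.len_le_of_not_isValid fun hv => by simp [limMatch, hi, hv] at hx
    · exact len_le_of_not_immortal hi
  · have hB' : B.IsValid := by
      by_contra hB'
      rw [limMatch_preimage_of_not_isValid hB', Set.ncard_empty] at hB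
      exact Nat.not_lt_zero _ (hB.trans_eq (if_neg hB'))
    rw [h4]
    by_contra! hlt
    rw [ncard_limMatch_preimage hB'] at hB
    exact hB.ne (limMult_eq hq hB' hlt).symm
  · simp only [limMatch] at hx
    split_ifs at hx with h
    cases hx
    exact h.1.close_limBar

end CopyChain

theorem exists_qTame_hasMatching_of_hasMatching_succ (v : ℕ → Barcode) (hv : ∀ k, (v k).QTame)
    (h : ∀ k, HasMatching (v k) (v (k + 1)) ((1 / 2 : ℝ) ^ k)) :
    ∃ L : Barcode, L.QTame ∧ ∀ k, HasMatching (v k) L (2 * (1 / 2 : ℝ) ^ k) := by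
  choose σ hσ using fun k => (h k).exists_isCopyMatching
  let C : CopyChain := ⟨v, σ, hσ⟩
  exact ⟨C.limBarcode, C.qTame_limBarcode hv, C.hasMatching_limBarcode hv⟩

lemma exists_shift_hasMatching_succ (u : ℕ → Barcode)
    (h : ∀ k, qdist (u k) (u (k + 1)) < ((1 / 2 : ℝ) ^ k : ℝ)) :
    ∃ e : ℕ → ℝ, ∀ k, HasMatching ((u k).shift (e k)) ((u (k + 1)).shift (e (k + 1)))
      ((1 / 2 : ℝ) ^ k) := by
  choose c δ hδ hδlt hm using fun k => exists_hasMatching_of_qdist_lt (h k)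
  refine ⟨fun k => ∑ i ∈ Finset.range k, c i, fun k => ?_⟩
  have := ((hm k).mono (hδlt k).le).shift (∑ i ∈ Finset.range k, c i)
  rwa [shift_shift, ← Finset.sum_range_succ_comm] at this

end Barcode

/-- The space of q-tame barcodes modulo overall shift, with the quotient
distance, is complete: every sequence of q-tame barcodes that is Cauchy for the quotient
distance converges, for the quotient distance, to some q-tame barcode. -/
theorem qdist_complete (u : ℕ → Barcode) (hu : ∀ n, (u n).QTame)
    (hcauchy : ∀ ε : ℝ, 0 < ε → ∃ N : ℕ, ∀ m n : ℕ, N ≤ m → N ≤ n →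
      Barcode.qdist (u m) (u n) < (ε : EReal)) :
    ∃ L : Barcode, L.QTame ∧ ∀ ε : ℝ, 0 < ε → ∃ N : ℕ, ∀ n : ℕ, N ≤ n →
      Barcode.qdist (u n) L < (ε : EReal) := by
  have hfast (k : ℕ) : ∀ᶠ N in atTop, ∀ m n : ℕ, N ≤ m → N ≤ n →
      Barcode.qdist (u m) (u n) < (((1 / 2 : ℝ) ^ k : ℝ) : EReal) := by
    obtain ⟨N, hN⟩ := hcauchy _ (by positivity : (0 : ℝ) < (1 / 2) ^ k)
    exact eventually_atTop.2 ⟨N, fun j hj m n hm hn => hN m n (hj.trans hm) (hj.trans hn)⟩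
  obtain ⟨φ, hφ, hφN⟩ := extraction_forall_of_eventually hfast
  obtain ⟨e, he⟩ := Barcode.exists_shift_hasMatching_succ (u ∘ φ)
    fun k => hφN k _ _ le_rfl (hφ.monotone k.le_succ)
  obtain ⟨L, hL, hLm⟩ :=
    Barcode.exists_qTame_hasMatching_of_hasMatching_succ _ (fun k => (hu _).shift _) he
  refine ⟨L, hL, fun ε hε => ?_⟩
  obtain ⟨k, hk⟩ := exists_pow_lt_of_lt_one (by positivity : 0 < ε / 4)
    (by norm_num : (1 / 2 : ℝ) < 1)
  refine ⟨φ k, fun n hn => ?_⟩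
  have hkL : Barcode.qdist (u (φ k)) L < ((3 * (1 / 2 : ℝ) ^ k : ℝ) : EReal) := by
    have hm : (u (φ k)).HasMatching (L.shift (-e k)) (2 * (1 / 2 : ℝ) ^ k) := by
      simpa [Barcode.shift_shift, Barcode.shift_zero] using (hLm k).shift (-e k)
    refine (Barcode.qdist_le_of_hasMatching _ (by positivity) hm).trans_lt ?_
    exact EReal.coe_lt_coe_iff.2 (by linarith [pow_pos (by norm_num : (0 : ℝ) < 1 / 2) k])
  calc Barcode.qdist (u n) L < (((1 / 2 : ℝ) ^ k + 3 * (1 / 2 : ℝ) ^ k : ℝ) : EReal) :=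
        Barcode.qdist_lt_add (hφN k n (φ k) hn le_rfl) hkL
    _ ≤ ε := EReal.coe_le_coe_iff.2 (by linarith)
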